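/- Menelaus' theorem in the hyperbolic plane: if a hyperbolic line l does not pass through any vertex of a hyperbolic triangle ABC and meets line BC in Q, line CA in R, and line AB in P, then s(A,P,B)·s(B,Q,C)·s(C,R,A) = −1, where s(X,Z,Y) = ± sinh(d(X,Z))/sinh(d(Z,Y)) with sign + if Z is between X and Y and − otherwise. -/

import Mathlib

open Real Classical

/-- Lorentz bilinear form on ℝ³. -/
def lorentz (P Q : Fin 3 → ℝ) : ℝ := P 0 * Q 0 - P 1 * Q 1 - P 2 * Q 2

/-- Points of the hyperboloid model of H². -/
def onH (P : Fin 3 → ℝ) : Prop := 0 < P 0 ∧ lorentz P P = 1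

/-- Inverse hyperbolic cosine. -/
noncomputable def arcosh (x : ℝ) : ℝ := Real.log (x + Real.sqrt (x ^ 2 - 1))

/-- Hyperbolic distance in the hyperboloid model. -/
noncomputable def dH (P Q : Fin 3 → ℝ) : ℝ := _root_.arcosh (lorentz P Q)

/-- `P` lies between `A` and `B` on their common hyperbolic line (nonnegative
cone combination in the hyperboloid model). -/
def BtwH (A P B : Fin 3 → ℝ) : Prop := ∃ s t : ℝ, 0 ≤ s ∧ 0 ≤ t ∧ P = s • A + t • B

/-- Signed simple ratio of three distinct collinear points of H². -/
noncomputable def sRatio (A P B : Fin 3 → ℝ) : ℝ :=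
  (if BtwH A P B then 1 else -1) * (Real.sinh (dH A P) / Real.sinh (dH P B))


/-!
Write a point of the line `AB` as `P = a • A + b • B` in the hyperboloid model. Expanding
`lorentz P P = 1` gives `sinh d(A,P) = |b| sinh d(A,B)` and `sinh d(P,B) = |a| sinh d(A,B)`, and
`P` lies between `A` and `B` exactly when `a, b ≥ 0`; since `P 0 > 0`, `a` and `b` are not both
negative, so `s(A,P,B) = b / a`. If the line `l` is the plane `f = 0` of a linear form `f`, then
`a f(A) + b f(B) = 0`, i.e. `s(A,P,B) = -f(A) / f(B)`, and the product of the three ratios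
telescopes to `(-1)³`.
-/

lemma ite_mul_abs_div_abs {a b : ℝ} (h : 0 < a ∨ 0 < b) :
    (if 0 ≤ a ∧ 0 ≤ b then 1 else -1) * (|b| / |a|) = b / a := by
  rcases le_or_gt 0 a with ha | ha <;> rcases le_or_gt 0 b with hb | hb
  · simp [ha, hb, abs_of_nonneg]
  · simp [hb.not_ge, abs_of_nonneg ha, abs_of_neg hb, neg_div]
  · simp [ha.not_ge, abs_of_nonneg hb, abs_of_neg ha, div_neg]
  · rcases h with h | h <;> linarith

lemma div_eq_neg_div_of_map_smul_add_eq_zero {K M : Type*} [Field K] [AddCommGroup M] [Module K M]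
    (f : M →ₗ[K] K) {x y : M} {a b : K} (hne : a • x + b • y ≠ 0) (hf : f (a • x + b • y) = 0)
    (hy : f y ≠ 0) : b / a = -f x / f y := by
  simp only [map_add, map_smul, smul_eq_mul] at hf
  have ha : a ≠ 0 := by
    rintro rfl
    have hb : b = 0 := by simpa [hy] using hf
    simp [hb] at hne
  field_simp
  linear_combination hf

section Hyperboloid

variable {A B : Fin 3 → ℝ}

lemma lorentz_comm (A B : Fin 3 → ℝ) : lorentz A B = lorentz B A := by
  unfold lorentz; ring

lemma lorentz_smul_add_left (A B X : Fin 3 → ℝ) (a b : ℝ) :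
    lorentz (a • A + b • B) X = a * lorentz A X + b * lorentz B X := by
  simp only [lorentz, Pi.add_apply, Pi.smul_apply, smul_eq_mul]; ring

lemma lorentz_smul_add_right (X A B : Fin 3 → ℝ) (a b : ℝ) :
    lorentz X (a • A + b • B) = a * lorentz X A + b * lorentz X B := by
  rw [lorentz_comm, lorentz_smul_add_left, lorentz_comm A, lorentz_comm B]

lemma dH_comm (A B : Fin 3 → ℝ) : dH A B = dH B A := by
  rw [dH, dH, lorentz_comm]

/-- Lagrange's identity with `A 0 ^ 2 = 1 + A 1 ^ 2 + A 2 ^ 2` and `B 0 ^ 2 = 1 + B 1 ^ 2 + B 2 ^ 2`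
substituted: the reverse Cauchy–Schwarz inequality for the Lorentz form. -/
lemma sq_mul_sub_sq_of_onH (hA : onH A) (hB : onH B) :
    (A 0 * B 0) ^ 2 - (1 + A 1 * B 1 + A 2 * B 2) ^ 2
      = (A 1 - B 1) ^ 2 + (A 2 - B 2) ^ 2 + (A 1 * B 2 - A 2 * B 1) ^ 2 := by
  have hA1 := hA.2
  have hB1 := hB.2
  unfold lorentz at hA1 hB1
  linear_combination B 0 ^ 2 * hA1 + (1 + A 1 ^ 2 + A 2 ^ 2) * hB1

lemma one_le_lorentz (hA : onH A) (hB : onH B) : 1 ≤ lorentz A B := by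
  have key := sq_mul_sub_sq_of_onH hA hB
  have hpos : 0 < A 0 * B 0 := mul_pos hA.1 hB.1
  unfold lorentz
  nlinarith [sq_nonneg (A 1 - B 1), sq_nonneg (A 2 - B 2), sq_nonneg (A 1 * B 2 - A 2 * B 1)]

lemma one_lt_lorentz (hA : onH A) (hB : onH B) (hAB : A ≠ B) : 1 < lorentz A B := by
  refine (one_le_lorentz hA hB).lt_of_ne fun h => hAB ?_
  have key := sq_mul_sub_sq_of_onH hA hB
  unfold lorentz at h
  have hsum : (A 1 - B 1) ^ 2 + (A 2 - B 2) ^ 2 + (A 1 * B 2 - A 2 * B 1) ^ 2 = 0 := by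
    rw [← key, show A 0 * B 0 = 1 + A 1 * B 1 + A 2 * B 2 by linarith]; ring
  have h1 : A 1 = B 1 := by nlinarith [sq_nonneg (A 2 - B 2), sq_nonneg (A 1 * B 2 - A 2 * B 1)]
  have h2 : A 2 = B 2 := by nlinarith [sq_nonneg (A 1 - B 1), sq_nonneg (A 1 * B 2 - A 2 * B 1)]
  have h0 : A 0 = B 0 := by
    have hA1 := hA.2
    have hB1 := hB.2
    unfold lorentz at hA1 hB1
    nlinarith [hA.1, hB.1]
  funext i
  fin_cases i <;> assumption

lemma sinh_dH (hA : onH A) (hB : onH B) : sinh (dH A B) = √(lorentz A B ^ 2 - 1) :=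
  Real.sinh_arcosh (one_le_lorentz hA hB)

lemma sinh_dH_pos (hA : onH A) (hB : onH B) (hAB : A ≠ B) : 0 < sinh (dH A B) := by
  have := one_lt_lorentz hA hB hAB
  rw [sinh_dH hA hB]
  exact Real.sqrt_pos.mpr (by nlinarith)

lemma linearIndependent_pair_of_onH (hA : onH A) (hB : onH B) (hAB : A ≠ B) :
    LinearIndependent ℝ ![A, B] := by
  refine (LinearIndependent.pair_iff' fun h => hA.1.ne' (by simp [h])).mpr fun c hc => hAB ?_
  have hc2 : c ^ 2 = 1 := by
    have hA1 := hA.2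
    have hB1 := hB.2
    rw [← hc] at hB1
    simp only [lorentz, Pi.smul_apply, smul_eq_mul] at hA1 hB1
    linear_combination hB1 - c ^ 2 * hA1
  have hc0 : 0 < c := by
    have hB0 := hB.1
    rw [← hc, Pi.smul_apply, smul_eq_mul] at hB0
    exact pos_of_mul_pos_left hB0 hA.1.le
  have hc1 : c = 1 := by nlinarith
  rw [← hc, hc1, one_smul]

lemma sinh_dH_smul_add_left (hA : onH A) (hB : onH B) {a b : ℝ} (hP : onH (a • A + b • B)) :
    sinh (dH A (a • A + b • B)) = |b| * sinh (dH A B) := by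
  have hPP := hP.2
  rw [lorentz_smul_add_left, lorentz_smul_add_right, lorentz_smul_add_right, hA.2, hB.2,
    lorentz_comm B A] at hPP
  rw [sinh_dH hA hP, sinh_dH hA hB, lorentz_smul_add_right, hA.2, ← Real.sqrt_sq_eq_abs,
    ← Real.sqrt_mul (sq_nonneg b)]
  congr 1
  linear_combination hPP

lemma sinh_dH_smul_add_right (hA : onH A) (hB : onH B) {a b : ℝ} (hP : onH (a • A + b • B)) :
    sinh (dH (a • A + b • B) B) = |a| * sinh (dH A B) := by
  rw [add_comm] at hP ⊢
  rw [dH_comm, sinh_dH_smul_add_left hB hA hP, dH_comm]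

lemma btwH_smul_add_iff (hAB : LinearIndependent ℝ ![A, B]) {a b : ℝ} :
    BtwH A (a • A + b • B) B ↔ 0 ≤ a ∧ 0 ≤ b := by
  constructor
  · rintro ⟨s, t, hs, ht, hst⟩
    obtain ⟨rfl, rfl⟩ := hAB.eq_of_pair hst
    exact ⟨hs, ht⟩
  · rintro ⟨ha, hb⟩
    exact ⟨a, b, ha, hb, rfl⟩

lemma sRatio_smul_add (hA : onH A) (hB : onH B) (hAB : A ≠ B) {a b : ℝ}
    (hP : onH (a • A + b • B)) : sRatio A (a • A + b • B) B = b / a := by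
  rw [sRatio, btwH_smul_add_iff (linearIndependent_pair_of_onH hA hB hAB),
    sinh_dH_smul_add_left hA hB hP, sinh_dH_smul_add_right hA hB hP,
    mul_div_mul_right _ _ (sinh_dH_pos hA hB hAB).ne']
  convert ite_mul_abs_div_abs ?_ using 3
  by_contra! h
  have hP0 := hP.1
  simp only [Pi.add_apply, Pi.smul_apply, smul_eq_mul] at hP0
  nlinarith [hA.1, hB.1]

lemma sRatio_eq_neg_div {P : Fin 3 → ℝ} (hA : onH A) (hB : onH B) (hP : onH P) (hAB : A ≠ B)
    (hPAB : P ∈ Submodule.span ℝ {A, B}) (f : (Fin 3 → ℝ) →ₗ[ℝ] ℝ) (hfP : f P = 0)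
    (hfB : f B ≠ 0) : sRatio A P B = -f A / f B := by
  obtain ⟨a, b, rfl⟩ := Submodule.mem_span_pair.mp hPAB
  rw [sRatio_smul_add hA hB hAB hP]
  exact div_eq_neg_div_of_map_smul_add_eq_zero f (fun h => hP.1.ne' (congrFun h 0)) hfP hfB

end Hyperboloid

theorem hyperbolic_menelaus (A B C P Q R n : Fin 3 → ℝ)
    (hA : onH A) (hB : onH B) (hC : onH C)
    (hP : onH P) (hQ : onH Q) (hR : onH R)
    (hABC : LinearIndependent ℝ ![A, B, C])
    (hnA : n 0 * A 0 + n 1 * A 1 + n 2 * A 2 ≠ 0)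
    (hnB : n 0 * B 0 + n 1 * B 1 + n 2 * B 2 ≠ 0)
    (hnC : n 0 * C 0 + n 1 * C 1 + n 2 * C 2 ≠ 0)
    (hQmem : Q ∈ Submodule.span ℝ ({B, C} : Set (Fin 3 → ℝ)))
    (hQl : n 0 * Q 0 + n 1 * Q 1 + n 2 * Q 2 = 0)
    (hRmem : R ∈ Submodule.span ℝ ({C, A} : Set (Fin 3 → ℝ)))
    (hRl : n 0 * R 0 + n 1 * R 1 + n 2 * R 2 = 0)
    (hPmem : P ∈ Submodule.span ℝ ({A, B} : Set (Fin 3 → ℝ)))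
    (hPl : n 0 * P 0 + n 1 * P 1 + n 2 * P 2 = 0) :
    sRatio A P B * sRatio B Q C * sRatio C R A = -1 := by
  let f : (Fin 3 → ℝ) →ₗ[ℝ] ℝ := dotProductBilin ℝ ℝ n
  have hf : ∀ X, f X = n 0 * X 0 + n 1 * X 1 + n 2 * X 2 := fun X => by
    simp [f, dotProduct, Fin.sum_univ_three]
  have hne : ∀ i j : Fin 3, i ≠ j → ![A, B, C] i ≠ ![A, B, C] j := fun i j => hABC.injective.ne
  rw [sRatio_eq_neg_div hA hB hP (hne 0 1 (by decide)) hPmem f (by rwa [hf]) (by rwa [hf]),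
    sRatio_eq_neg_div hB hC hQ (hne 1 2 (by decide)) hQmem f (by rwa [hf]) (by rwa [hf]),
    sRatio_eq_neg_div hC hA hR (hne 2 0 (by decide)) hRmem f (by rwa [hf]) (by rwa [hf]),
    hf, hf, hf]
  field_simp
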